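/- For every a ∈ A one has Σ ε(σ(a₍₁₎)) · a₍₂₎ = S²(σ'(a)). (This expresses a ⊲ δ̂⁻¹ = S²(σ'(a)), where δ̂⁻¹ = ε∘σ is the inverse of the modular element of the dual.) -/

import Mathlib

/-!
Strong left invariance, `S(Σ φ(a₂ b) a₁) = Σ φ(a b₂) b₁`, together with `φ(ab) = φ(b σ(a))` and
faithfulness of `φ` gives `Δ ∘ σ = (S² ⊗ σ) ∘ Δ`; applying `id ⊗ ε` shows `σ(c) = S²(Σ χ(c₂) c₁)`
for the character `χ = ε ∘ σ`. Since `ψ = φ ∘ S`, the two modular automorphisms satisfy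
`σ ∘ S ∘ σ' = S`, so for `y = σ'(a)` we get `S a = σ(S y) = S³(y ⊲ χ∘S)`, i.e. `a = S²(y ⊲ χ∘S)`.
As `χ ∘ S` is the convolution inverse of `χ` and `χ ∘ S² = χ`, acting by `χ` gives `a ⊲ χ = S² y`.
-/

open TensorProduct HopfAlgebra

/-- `a ⊲ f = Σ f(a₍₁₎) a₍₂₎` : the standard right action of a linear functional on `A`. -/
noncomputable def rAct {A : Type*} [Ring A] [HopfAlgebra ℂ A] (f : A →ₗ[ℂ] ℂ) : A →ₗ[ℂ] A :=
  (TensorProduct.lid ℂ A).toLinearMap ∘ₗ LinearMap.rTensor A f ∘ₗ Coalgebra.comul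

open Coalgebra WithConv

theorem TensorProduct.eq_zero_of_forall_rid_lTensor {K V W ι : Type*} [Field K]
    [AddCommGroup V] [Module K V] [AddCommGroup W] [Module K W] (g : ι → Module.Dual K W)
    (hg : ∀ w, (∀ j, g j w = 0) → w = 0) {t : V ⊗[K] W}
    (ht : ∀ j, TensorProduct.rid K V ((g j).lTensor V t) = 0) : t = 0 := by
  classical
  let b := Module.Basis.ofVectorSpace K V
  have hswap : ∀ (f : Module.Dual K V) (j : ι) (t : V ⊗[K] W),
      g j (TensorProduct.lid K W (f.rTensor W t)) =
        f (TensorProduct.rid K V ((g j).lTensor V t)) := by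
    intro f j t
    induction t using TensorProduct.induction_on with
    | zero => simp
    | tmul x y => simp [mul_comm]
    | add t t' ht ht' => simp only [map_add, ht, ht']
  apply (equivFinsuppOfBasisLeft b).injective
  ext i
  rw [equivFinsuppOfBasisLeft_apply, map_zero, Finsupp.zero_apply]
  exact hg _ fun j => by rw [hswap, ht, map_zero]

namespace HopfAlgebra

variable {R A : Type*} [CommSemiring R] [Semiring A] [HopfAlgebra R A]

lemma sum_antipode_tmul_one_mul_comul {a : A} {ι : Type*} (r : Repr R a ι) :
    ∑ i ∈ r.index, (antipode R (r.left i) ⊗ₜ[R] (1 : A)) * comul (r.right i) = 1 ⊗ₜ a := by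
  let Φ : A ⊗[R] (A ⊗[R] A) →ₗ[R] A ⊗[R] A :=
    map (LinearMap.mul' R A ∘ₗ (antipode R).rTensor A) .id ∘ₗ (TensorProduct.assoc R A A A).symm
  have hΦ : ∀ u v w : A, Φ (u ⊗ₜ (v ⊗ₜ w)) = (antipode R u * v) ⊗ₜ w := fun _ _ _ => rfl
  calc ∑ i ∈ r.index, (antipode R (r.left i) ⊗ₜ[R] (1 : A)) * comul (r.right i)
      = ∑ i ∈ r.index, ∑ j ∈ (ℛ R (r.right i)).index,
          Φ (r.left i ⊗ₜ ((ℛ R (r.right i)).left j ⊗ₜ (ℛ R (r.right i)).right j)) := by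
        refine Finset.sum_congr rfl fun i _ => ?_
        simp [hΦ, ← (ℛ R (r.right i)).eq, Finset.mul_sum]
    _ = ∑ i ∈ r.index, ∑ j ∈ (ℛ R (r.left i)).index,
          Φ ((ℛ R (r.left i)).left j ⊗ₜ ((ℛ R (r.left i)).right j ⊗ₜ r.right i)) := by
        simpa only [map_sum] using congr(Φ $(sum_tmul_tmul_eq r (fun i => ℛ R (r.left i))
          (fun i => ℛ R (r.right i)))).symm
    _ = 1 ⊗ₜ a := by
        simp only [hΦ, ← sum_tmul, sum_antipode_mul_eq_smul, smul_tmul, ← tmul_sum,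
          sum_counit_smul]

lemma map_antipode_comm_comul_convMul_comul :
    toConv (map (antipode R) (antipode R) ∘ₗ (TensorProduct.comm R A A).toLinearMap ∘ₗ comul) *
      toConv (comul (R := R) (A := A)) = 1 := by
  let Φ : A ⊗[R] (A ⊗[R] A) →ₗ[R] A ⊗[R] A :=
    LinearMap.mul' R (A ⊗[R] A) ∘ₗ
      map (map (antipode R) (antipode R) ∘ₗ (TensorProduct.comm R A A).toLinearMap) comul ∘ₗ
      (TensorProduct.assoc R A A A).symm
  have hΦ : ∀ u v w : A,
      Φ (u ⊗ₜ (v ⊗ₜ w)) = (antipode R v ⊗ₜ antipode R u) * comul w := fun _ _ _ => rfl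
  have hinner : ∀ (c z : A),
      ∑ j ∈ (ℛ R z).index, (antipode R ((ℛ R z).left j) ⊗ₜ[R] c) * comul ((ℛ R z).right j) =
        1 ⊗ₜ[R] (c * z) := by
    intro c z
    calc _ = (1 ⊗ₜ[R] c) * ∑ j ∈ (ℛ R z).index,
            (antipode R ((ℛ R z).left j) ⊗ₜ[R] (1 : A)) * comul ((ℛ R z).right j) := by
          simp only [Finset.mul_sum, ← mul_assoc, Algebra.TensorProduct.tmul_mul_tmul, one_mul,
            mul_one]
      _ = 1 ⊗ₜ (c * z) := by
          rw [sum_antipode_tmul_one_mul_comul, Algebra.TensorProduct.tmul_mul_tmul, one_mul]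
  ext a
  set r := ℛ R a
  calc _ = ∑ i ∈ r.index, ∑ j ∈ (ℛ R (r.left i)).index,
          Φ ((ℛ R (r.left i)).left j ⊗ₜ ((ℛ R (r.left i)).right j ⊗ₜ r.right i)) := by
        rw [r.convMul_apply]
        refine Finset.sum_congr rfl fun i _ => ?_
        simp [hΦ, ← (ℛ R (r.left i)).eq, Finset.sum_mul]
    _ = ∑ i ∈ r.index, ∑ j ∈ (ℛ R (r.right i)).index,
          Φ (r.left i ⊗ₜ ((ℛ R (r.right i)).left j ⊗ₜ (ℛ R (r.right i)).right j)) := by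
        simpa only [map_sum] using congr(Φ $(sum_tmul_tmul_eq r (fun i => ℛ R (r.left i))
          (fun i => ℛ R (r.right i))))
    _ = _ := by
        simp only [hΦ, hinner, ← tmul_sum, sum_antipode_mul_eq_smul, tmul_smul]
        simp [Algebra.algebraMap_eq_smul_one, Algebra.TensorProduct.one_def]

lemma comul_antipode (a : A) :
    comul (antipode R a) = map (antipode R) (antipode R) (TensorProduct.comm R A A (comul a)) :=
  congr($(left_inv_eq_right_inv (M := WithConv (A →ₗ[R] A ⊗[R] A))
    map_antipode_comm_comul_convMul_comul LinearMap.comul_right_inv).ofConv a).symm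

end HopfAlgebra

namespace AlgHom

variable {R A B : Type*} [CommSemiring R] [Semiring A] [HopfAlgebra R A]

lemma comp_antipode_convMul_self [Semiring B] [Algebra R B] (χ : A →ₐ[R] B) :
    toConv (χ.toLinearMap ∘ₗ antipode R) * toConv χ.toLinearMap = 1 := by
  have := LinearMap.algHom_comp_convMul_distrib χ (toConv (antipode R)) (toConv .id)
  rw [LinearMap.antipode_mul_id] at this
  ext a
  simpa using congr($this a).symm

def compAntipode [CommSemiring B] [Algebra R B] (χ : A →ₐ[R] B) : A →ₐ[R] B :=
  .ofLinearMap (χ.toLinearMap ∘ₗ antipode R) (by simp)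
    (fun x y => by simp [antipode_mul_antidistrib, mul_comm])

lemma comp_antipode_comp_antipode [CommSemiring B] [Algebra R B] (χ : A →ₐ[R] B) :
    χ.toLinearMap ∘ₗ antipode R ∘ₗ antipode R = χ.toLinearMap :=
  congr(ofConv $(left_inv_eq_right_inv (M := WithConv (A →ₗ[R] B))
    (comp_antipode_convMul_self (compAntipode χ)) (comp_antipode_convMul_self χ)))

end AlgHom

noncomputable def lAct {R A : Type*} [CommSemiring R] [AddCommMonoid A] [Module R A] [Coalgebra R A]
    (f : A →ₗ[R] R) : A →ₗ[R] A :=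
  (TensorProduct.rid R A).toLinearMap ∘ₗ LinearMap.lTensor A f ∘ₗ comul

lemma lAct_apply {R A ι : Type*} [CommSemiring R] [AddCommMonoid A] [Module R A] [Coalgebra R A]
    (f : A →ₗ[R] R) {a : A} (r : Repr R a ι) :
    lAct f a = ∑ i ∈ r.index, f (r.right i) • r.left i := by
  simp [lAct, ← r.eq]

section RightAction

variable {A : Type*} [Ring A] [HopfAlgebra ℂ A]

lemma rAct_apply (f : A →ₗ[ℂ] ℂ) {a : A} {ι : Type*} (r : Repr ℂ a ι) :
    rAct f a = ∑ i ∈ r.index, f (r.left i) • r.right i := by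
  simp [rAct, ← r.eq]

lemma rAct_one (a : A) : rAct (1 : WithConv (A →ₗ[ℂ] ℂ)).ofConv a = a := by
  simpa [rAct_apply _ (ℛ ℂ a)] using sum_counit_smul (ℛ ℂ a)

lemma rAct_rAct (f g : A →ₗ[ℂ] ℂ) (a : A) :
    rAct f (rAct g a) = rAct (toConv g * toConv f).ofConv a := by
  let Φ : A ⊗[ℂ] (A ⊗[ℂ] A) →ₗ[ℂ] A :=
    (TensorProduct.lid ℂ A).toLinearMap ∘ₗ
      map g ((TensorProduct.lid ℂ A).toLinearMap ∘ₗ f.rTensor A)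
  have hleft : ∀ t, rAct f (TensorProduct.lid ℂ A (g.rTensor A t)) = Φ (comul.lTensor A t) := by
    intro t
    induction t using TensorProduct.induction_on with
    | zero => simp
    | tmul x y => simp [Φ, rAct]
    | add t t' ht ht' => simp only [map_add, ht, ht']
  have hright : ∀ t, Φ (TensorProduct.assoc ℂ A A A (comul.rTensor A t)) =
      TensorProduct.lid ℂ A ((toConv g * toConv f).ofConv.rTensor A t) := by
    intro t
    induction t using TensorProduct.induction_on with
    | zero => simp
    | tmul x y =>
        simp [Φ, ← (ℛ ℂ x).eq, sum_tmul, (ℛ ℂ x).convMul_apply, mul_smul, smul_comm (f _)]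
    | add t t' ht ht' => simp only [map_add, ht, ht']
  calc rAct f (rAct g a) = Φ (comul.lTensor A (comul a)) := hleft (comul a)
    _ = _ := by rw [← coassoc_apply, hright]; rfl

lemma rAct_rAct_comp_antipode (χ : A →ₐ[ℂ] ℂ) (a : A) :
    rAct χ.toLinearMap (rAct (χ.toLinearMap ∘ₗ antipode ℂ) a) = a := by
  rw [rAct_rAct, χ.comp_antipode_convMul_self, rAct_one]

lemma lAct_antipode (f : A →ₗ[ℂ] ℂ) (a : A) :
    lAct f (antipode ℂ a) = antipode ℂ (rAct (f ∘ₗ antipode ℂ) a) := by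
  simp [lAct, rAct, comul_antipode, ← (ℛ ℂ a).eq, map_sum]

lemma rAct_antipode (f : A →ₗ[ℂ] ℂ) (a : A) :
    rAct f (antipode ℂ a) = antipode ℂ (lAct (f ∘ₗ antipode ℂ) a) := by
  simp [lAct, rAct, comul_antipode, ← (ℛ ℂ a).eq, map_sum]

lemma rAct_antipode_antipode (f : A →ₗ[ℂ] ℂ) (a : A) :
    rAct f (antipode ℂ (antipode ℂ a)) =
      antipode ℂ (antipode ℂ (rAct (f ∘ₗ antipode ℂ ∘ₗ antipode ℂ) a)) := by
  rw [rAct_antipode, lAct_antipode, LinearMap.comp_assoc]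

end RightAction

section Integral

variable {K A : Type*} [Field K] [Ring A] [HopfAlgebra K A] {φ : A →ₗ[K] K}

lemma antipode_lAct_comp_mulRight (hφ : ∀ a, lAct φ a = φ a • 1) (a b : A) :
    antipode K (lAct (φ ∘ₗ LinearMap.mulRight K b) a) = lAct (φ ∘ₗ LinearMap.mulLeft K a) b := by
  let P : A ⊗[K] A →ₗ[K] A := (TensorProduct.rid K A).toLinearMap ∘ₗ φ.lTensor A
  have hP_tmul_one_mul : ∀ (x : A) (t : A ⊗[K] A), P ((x ⊗ₜ 1) * t) = x * P t := by
    intro x t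
    induction t using TensorProduct.induction_on with
    | zero => simp
    | tmul y z => simp [P]
    | add t t' ht ht' => simp only [mul_add, map_add, ht, ht']
  have hP_comul : ∀ y, P (comul y) = φ y • 1 := hφ
  have hP_one_tmul_mul : ∀ t, P ((1 ⊗ₜ a) * t) =
      TensorProduct.rid K A ((φ ∘ₗ LinearMap.mulLeft K a).lTensor A t) := by
    intro t
    induction t using TensorProduct.induction_on with
    | zero => simp
    | tmul y z => simp [P]
    | add t t' ht ht' => simp only [mul_add, map_add, ht, ht']
  set r := ℛ K a
  calc antipode K (lAct (φ ∘ₗ LinearMap.mulRight K b) a)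
      = ∑ i ∈ r.index, antipode K (r.left i) * P (comul (r.right i * b)) := by
        simp only [lAct_apply _ r, map_sum, map_smul, hP_comul, mul_smul_comm, mul_one,
          LinearMap.comp_apply, LinearMap.mulRight_apply]
    _ = P ((∑ i ∈ r.index, (antipode K (r.left i) ⊗ₜ[K] (1 : A)) * comul (r.right i)) *
          comul b) := by
        simp [Finset.sum_mul, map_sum, mul_assoc, hP_tmul_one_mul]
    _ = lAct (φ ∘ₗ LinearMap.mulLeft K a) b := by
        rw [HopfAlgebra.sum_antipode_tmul_one_mul_comul, hP_one_tmul_mul]; rfl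

lemma comul_modularAut (hφ : ∀ a, lAct φ a = φ a • 1)
    (hfaith : ∀ a : A, (∀ b : A, φ (b * a) = 0) → a = 0)
    (σ : A ≃ₐ[K] A) (hσ : ∀ a b : A, φ (a * b) = φ (b * σ a)) (c : A) :
    comul (σ c) = map (antipode K ∘ₗ antipode K) σ.toLinearMap (comul c) := by
  refine sub_eq_zero.mp <| TensorProduct.eq_zero_of_forall_rid_lTensor
    (fun a => φ ∘ₗ LinearMap.mulLeft K a) hfaith fun a => ?_
  have hmulRight_σ : φ ∘ₗ LinearMap.mulRight K (σ c) = φ ∘ₗ LinearMap.mulLeft K c := by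
    ext x; exact (hσ c x).symm
  have hmulRight : φ ∘ₗ LinearMap.mulRight K a = φ ∘ₗ LinearMap.mulLeft K a ∘ₗ σ.toLinearMap := by
    ext y; exact hσ y a
  have hslice : TensorProduct.rid K A ((φ ∘ₗ LinearMap.mulLeft K a).lTensor A
      (map (antipode K ∘ₗ antipode K) σ.toLinearMap (comul c))) =
      antipode K (antipode K (lAct (φ ∘ₗ LinearMap.mulLeft K a ∘ₗ σ.toLinearMap) c)) := by
    simp [lAct_apply _ (ℛ K c), ← (ℛ K c).eq, map_sum]
  rw [map_sub, map_sub, hslice, sub_eq_zero]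
  calc lAct (φ ∘ₗ LinearMap.mulLeft K a) (σ c)
      = antipode K (lAct (φ ∘ₗ LinearMap.mulLeft K c) a) := by
        rw [← antipode_lAct_comp_mulRight hφ, hmulRight_σ]
    _ = antipode K (antipode K (lAct (φ ∘ₗ LinearMap.mulLeft K a ∘ₗ σ.toLinearMap) c)) := by
        rw [← antipode_lAct_comp_mulRight hφ, hmulRight]

lemma modularAut_eq_antipode_antipode_lAct (hφ : ∀ a, lAct φ a = φ a • 1)
    (hfaith : ∀ a : A, (∀ b : A, φ (b * a) = 0) → a = 0)
    (σ : A ≃ₐ[K] A) (hσ : ∀ a b : A, φ (a * b) = φ (b * σ a)) (c : A) :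
    σ c = antipode K (antipode K (lAct (counit ∘ₗ σ.toLinearMap) c)) := by
  have := congr(TensorProduct.rid K A (counit.lTensor A $(comul_modularAut hφ hfaith σ hσ c)))
  simpa [lAct_apply _ (ℛ K c), ← (ℛ K c).eq, map_sum] using this

lemma modularAut_antipode_modularAut_right (hS : Function.Surjective (antipode K (A := A)))
    (hfaith : ∀ a : A, (∀ b : A, φ (b * a) = 0) → a = 0)
    (σ : A ≃ₐ[K] A) (hσ : ∀ a b : A, φ (a * b) = φ (b * σ a)) (σ' : A ≃ₐ[K] A)
    (hσ' : ∀ a b : A, φ (antipode K (a * b)) = φ (antipode K (b * σ' a))) (a : A) :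
    σ (antipode K (σ' a)) = antipode K a := by
  refine sub_eq_zero.mp <| hfaith _ fun c => ?_
  obtain ⟨b, rfl⟩ := hS c
  rw [mul_sub, map_sub, sub_eq_zero, ← hσ, ← antipode_mul_antidistrib, ← hσ',
    antipode_mul_antidistrib]

end Integral

theorem dual_modular_element_right_action_general
    {A : Type*} [Ring A] [HopfAlgebra ℂ A]
    (hS : Function.Bijective (antipode (R := ℂ) (A := A)))
    (φ : A →ₗ[ℂ] ℂ)
    (hφL : ∀ a : A,
      (TensorProduct.rid ℂ A) (LinearMap.lTensor A φ (Coalgebra.comul a)) = φ a • (1 : A))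
    (hφf2 : ∀ a : A, (∀ b : A, φ (b * a) = 0) → a = 0)
    (σ : A ≃ₐ[ℂ] A) (hσ : ∀ a b : A, φ (a * b) = φ (b * σ a))
    (σ' : A ≃ₐ[ℂ] A)
    (hσ' : ∀ a b : A, φ (antipode (R := ℂ) (a * b)) = φ (antipode (R := ℂ) (b * σ' a))) :
    ∀ a : A,
      rAct (Coalgebra.counit ∘ₗ σ.toLinearMap) a =
        antipode (R := ℂ) (antipode (R := ℂ) (σ' a)) := by
  intro a
  let χ : A →ₐ[ℂ] ℂ := (Bialgebra.counitAlgHom ℂ A).comp σ.toAlgHom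
  have ha : a = antipode ℂ (antipode ℂ (rAct (χ.toLinearMap ∘ₗ antipode ℂ) (σ' a))) := by
    refine hS.1 ?_
    rw [← modularAut_antipode_modularAut_right hS.2 hφf2 σ hσ σ' hσ' a,
      modularAut_eq_antipode_antipode_lAct hφL hφf2 σ hσ, lAct_antipode]
    rfl
  calc rAct χ.toLinearMap a
      = antipode ℂ (antipode ℂ (rAct (χ.toLinearMap ∘ₗ antipode ℂ ∘ₗ antipode ℂ)
          (rAct (χ.toLinearMap ∘ₗ antipode ℂ) (σ' a)))) := by
        rw [← rAct_antipode_antipode, ← ha]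
    _ = antipode ℂ (antipode ℂ (σ' a)) := by
        rw [χ.comp_antipode_comp_antipode, rAct_rAct_comp_antipode]

/-- `Σ ε(σ(a₍₁₎)) a₍₂₎ = S²(σ'(a))`, i.e. `a ⊲ δ̂⁻¹ = S²(σ'(a))` where
`δ̂⁻¹ = ε∘σ` is the inverse of the modular element of the dual. -/
theorem dual_modular_element_right_action
    {A : Type*} [Ring A] [HopfAlgebra ℂ A]
    (hS : Function.Bijective (antipode (R := ℂ) (A := A)))
    (φ : A →ₗ[ℂ] ℂ) (hφ0 : φ ≠ 0)
    (hφL : ∀ a : A,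
      (TensorProduct.rid ℂ A) (LinearMap.lTensor A φ (Coalgebra.comul a)) = φ a • (1 : A))
    (hφf1 : ∀ a : A, (∀ b : A, φ (a * b) = 0) → a = 0)
    (hφf2 : ∀ a : A, (∀ b : A, φ (b * a) = 0) → a = 0)
    (σ : A ≃ₐ[ℂ] A) (hσ : ∀ a b : A, φ (a * b) = φ (b * σ a))
    (hψR : ∀ a : A,
      (TensorProduct.lid ℂ A) (LinearMap.rTensor A (φ ∘ₗ antipode (R := ℂ))
        (Coalgebra.comul a)) = φ (antipode (R := ℂ) a) • (1 : A))
    (σ' : A ≃ₐ[ℂ] A)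
    (hσ' : ∀ a b : A, φ (antipode (R := ℂ) (a * b)) = φ (antipode (R := ℂ) (b * σ' a))) :
    ∀ a : A,
      rAct (Coalgebra.counit ∘ₗ σ.toLinearMap) a =
        antipode (R := ℂ) (antipode (R := ℂ) (σ' a)) :=
  dual_modular_element_right_action_general hS φ hφL hφf2 σ hσ σ' hσ'
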